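/- arXiv:1912.06419 — 2 statements merged into one kernel-verified Lean document; each statement's English description precedes it below -/
import Mathlib

section
/- For every N ≥ 2, the recursively defined thresholds a_{N,1}, a_{N,2}, ..., a_{N,N-1} are real numbers lying in the interval [x_1, x_k] and are strictly increasing in the second index: a_{N,1} < a_{N,2} < ... < a_{N,N-1}. -/
open Finset

/-- The recursively defined thresholds `a_{N,r}` of Derman–Lieberman–Ross:
`a_{N,0} = -∞`, `a_{N,N} = +∞` (indeed `a_{N,r} = +∞` for `r ≥ N`), and for
`N ≥ 2`, `1 ≤ r ≤ N-1`,
`a_{N,r} = Σ_{j=1}^k p_j · min(max(x_j, a_{N-1,r-1}), a_{N-1,r})`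
(the conventions `max(x,-∞) = x`, `min(x,+∞) = x` hold automatically in `EReal`). -/
noncomputable def aT (k : ℕ) (x p : ℕ → ℝ) : ℕ → ℕ → EReal
  | 0, _ => ⊥
  | N + 1, r =>
    if r = 0 then ⊥
    else if N + 1 ≤ r then ⊤
    else ∑ j ∈ Finset.Icc 1 k,
      (p j : EReal) * min (max (x j : EReal) (aT k x p N (r - 1))) (aT k x p N r)

/-! Row `N + 1` averages, with weights `p_j`, the clamps `min (max x_j a_{N,r-1}) a_{N,r}` of the
points `x_j` to consecutive intervals of row `N`. The invariant carried along is that a row is `⊥`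
at `0`, `⊤` at `N`, and in `[x_1, x_k]` and strictly increasing in between. For `r < s` every
clamp to the `r`-th interval lies below every clamp to the `s`-th one, and the clamps of `x_1` and
of `x_k` cannot both tie: that would force `x_1 ≥ a_{N,r} = a_{N,s-1} ≥ x_k`. -/

lemma EReal.coe_finset_sum {ι : Type*} (s : Finset ι) (f : ι → ℝ) :
    ((∑ j ∈ s, f j : ℝ) : EReal) = ∑ j ∈ s, (f j : EReal) :=
  map_sum (⟨⟨Real.toEReal, EReal.coe_zero⟩, EReal.coe_add⟩ : ℝ →+ EReal) f s

section WeightedSum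

variable {ι : Type*} {s : Finset ι} {p : ι → ℝ} {lo hi : ℝ} {a : EReal} {f g : ι → EReal}

lemma EReal.coe_toReal_of_mem_Icc (ha : a ∈ Set.Icc (lo : EReal) hi) : (a.toReal : EReal) = a :=
  EReal.coe_toReal (ne_top_of_le_ne_top (EReal.coe_ne_top hi) ha.2)
    (ne_bot_of_le_ne_bot (EReal.coe_ne_bot lo) ha.1)

lemma EReal.toReal_mem_Icc (ha : a ∈ Set.Icc (lo : EReal) hi) : a.toReal ∈ Set.Icc lo hi := by
  rwa [← EReal.coe_toReal_of_mem_Icc ha, Set.mem_Icc, EReal.coe_le_coe_iff,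
    EReal.coe_le_coe_iff] at ha

lemma sum_coe_mul_eq_coe_sum_mul_toReal (hf : ∀ j ∈ s, f j ∈ Set.Icc (lo : EReal) hi) :
    ∑ j ∈ s, (p j : EReal) * f j = ((∑ j ∈ s, p j * (f j).toReal : ℝ) : EReal) := by
  rw [EReal.coe_finset_sum]
  refine Finset.sum_congr rfl fun j hj => ?_
  rw [EReal.coe_mul, EReal.coe_toReal_of_mem_Icc (hf j hj)]

lemma sum_coe_mul_mem_Icc (hp : ∀ j ∈ s, 0 ≤ p j) (hsum : ∑ j ∈ s, p j = 1)
    (hf : ∀ j ∈ s, f j ∈ Set.Icc (lo : EReal) hi) :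
    ∑ j ∈ s, (p j : EReal) * f j ∈ Set.Icc (lo : EReal) hi := by
  rw [sum_coe_mul_eq_coe_sum_mul_toReal hf, Set.mem_Icc, EReal.coe_le_coe_iff,
    EReal.coe_le_coe_iff, ← Set.mem_Icc]
  exact (convex_Icc lo hi).sum_mem hp hsum fun j hj => EReal.toReal_mem_Icc (hf j hj)

lemma sum_coe_mul_lt_sum_coe_mul (hp : ∀ j ∈ s, 0 < p j)
    (hf : ∀ j ∈ s, f j ∈ Set.Icc (lo : EReal) hi) (hg : ∀ j ∈ s, g j ∈ Set.Icc (lo : EReal) hi)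
    (hle : ∀ j ∈ s, f j ≤ g j) (hlt : ∃ j ∈ s, f j < g j) :
    ∑ j ∈ s, (p j : EReal) * f j < ∑ j ∈ s, (p j : EReal) * g j := by
  have hreal : ∀ j ∈ s, (f j).toReal ≤ (g j).toReal ∧ ((f j < g j) → (f j).toReal < (g j).toReal) :=
    fun j hj => by
      rw [← EReal.coe_le_coe_iff, ← EReal.coe_lt_coe_iff, EReal.coe_toReal_of_mem_Icc (hf j hj),
        EReal.coe_toReal_of_mem_Icc (hg j hj)]
      exact ⟨hle j hj, id⟩
  rw [sum_coe_mul_eq_coe_sum_mul_toReal hf, sum_coe_mul_eq_coe_sum_mul_toReal hg,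
    EReal.coe_lt_coe_iff]
  obtain ⟨i, hi, hfg⟩ := hlt
  exact Finset.sum_lt_sum (fun j hj => mul_le_mul_of_nonneg_left (hreal j hj).1 (hp j hj).le)
    ⟨i, hi, mul_lt_mul_of_pos_left ((hreal i hi).2 hfg) (hp i hi)⟩

end WeightedSum

lemma min_max_lt_min_max_or {α : Type*} [LinearOrder α] {a b c d y z : α}
    (hab : a < b) (hbc : b ≤ c) (hcd : c < d) (hyz : y < z) :
    min (max y a) b < min (max y c) d ∨ min (max z a) b < min (max z c) d := by
  grind

structure IsThresholdRow (lo hi : ℝ) (N : ℕ) (b : ℕ → EReal) : Prop where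
  apply_zero : b 0 = ⊥
  apply_self : b N = ⊤
  mem_Icc : ∀ r ∈ Set.Ioo 0 N, b r ∈ Set.Icc (lo : EReal) hi
  strictMonoOn : StrictMonoOn b (Set.Ioo 0 N)

namespace IsThresholdRow

variable {lo hi : ℝ} {N r s : ℕ} {b : ℕ → EReal}

lemma le_coe (hb : IsThresholdRow lo hi N b) (hr : r < N) : b r ≤ hi := by
  rcases Nat.eq_zero_or_pos r with rfl | hr0
  · simp [hb.apply_zero]
  · exact (hb.mem_Icc r ⟨hr0, hr⟩).2

lemma coe_le (hb : IsThresholdRow lo hi N b) (hr : 0 < r) (hrN : r ≤ N) : lo ≤ b r := by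
  rcases hrN.eq_or_lt with rfl | hrN
  · simp [hb.apply_self]
  · exact (hb.mem_Icc r ⟨hr, hrN⟩).1

lemma strictMonoOn_Iic (hb : IsThresholdRow lo hi N b) : StrictMonoOn b (Set.Iic N) := by
  intro r hr s hs hrs
  rcases Nat.eq_zero_or_pos r with rfl | hr0
  · rw [hb.apply_zero, bot_lt_iff_ne_bot]
    exact ne_bot_of_le_ne_bot (EReal.coe_ne_bot lo) (hb.coe_le hrs hs)
  rcases (Set.mem_Iic.1 hs).eq_or_lt with rfl | hsN
  · rw [hb.apply_self, lt_top_iff_ne_top]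
    exact ne_top_of_le_ne_top (EReal.coe_ne_top hi) (hb.le_coe hrs)
  · exact hb.strictMonoOn ⟨hr0, by omega⟩ ⟨by omega, hsN⟩ hrs

lemma clamp_mem_Icc (hb : IsThresholdRow lo hi N b) {y : ℝ} (hy : y ∈ Set.Icc lo hi)
    (hr : 0 < r) (hrN : r ≤ N) :
    min (max (y : EReal) (b (r - 1))) (b r) ∈ Set.Icc (lo : EReal) hi :=
  ⟨le_min (le_max_of_le_left (EReal.coe_le_coe_iff.2 hy.1)) (hb.coe_le hr hrN),
    min_le_of_left_le (max_le (EReal.coe_le_coe_iff.2 hy.2) (hb.le_coe (by omega)))⟩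

lemma clamp_le_clamp (hb : IsThresholdRow lo hi N b) (y : EReal) (hrs : r ≤ s) (hsN : s ≤ N) :
    min (max y (b (r - 1))) (b r) ≤ min (max y (b (s - 1))) (b s) :=
  have hmono := hb.strictMonoOn_Iic.monotoneOn
  min_le_min
    (max_le_max le_rfl (hmono (Set.mem_Iic.2 (by omega)) (Set.mem_Iic.2 (by omega)) (by omega)))
    (hmono (Set.mem_Iic.2 (by omega)) hsN hrs)

lemma clamp_lt_clamp_or (hb : IsThresholdRow lo hi N b) {y z : EReal} (hyz : y < z)
    (hr : 0 < r) (hrs : r < s) (hsN : s ≤ N) :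
    min (max y (b (r - 1))) (b r) < min (max y (b (s - 1))) (b s) ∨
      min (max z (b (r - 1))) (b r) < min (max z (b (s - 1))) (b s) :=
  have hmono := hb.strictMonoOn_Iic
  min_max_lt_min_max_or (hmono (Set.mem_Iic.2 (by omega)) (Set.mem_Iic.2 (by omega)) (by omega))
    (hmono.monotoneOn (Set.mem_Iic.2 (by omega)) (Set.mem_Iic.2 (by omega)) (by omega))
    (hmono (Set.mem_Iic.2 (by omega)) hsN (by omega)) hyz

end IsThresholdRow

noncomputable def nextThresholdRow {ι : Type*} (s : Finset ι) (x p : ι → ℝ) (N : ℕ)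
    (b : ℕ → EReal) (r : ℕ) : EReal :=
  if r = 0 then ⊥
  else if N + 1 ≤ r then ⊤
  else ∑ j ∈ s, (p j : EReal) * min (max (x j : EReal) (b (r - 1))) (b r)

section NextRow

variable {ι : Type*} {s : Finset ι} {x p : ι → ℝ} {lo hi : ℝ} {N r : ℕ} {b : ℕ → EReal}

lemma nextThresholdRow_of_pos_of_le (hr : 0 < r) (hrN : r ≤ N) :
    nextThresholdRow s x p N b r =
      ∑ j ∈ s, (p j : EReal) * min (max (x j : EReal) (b (r - 1))) (b r) := by
  rw [nextThresholdRow, if_neg hr.ne', if_neg (by omega)]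

theorem IsThresholdRow.next (hb : IsThresholdRow lo hi N b)
    (hx : ∀ j ∈ s, x j ∈ Set.Icc lo hi) (hxlt : ∃ i ∈ s, ∃ j ∈ s, x i < x j)
    (hp : ∀ j ∈ s, 0 < p j) (hsum : ∑ j ∈ s, p j = 1) :
    IsThresholdRow lo hi (N + 1) (nextThresholdRow s x p N b) := by
  have hterm (r : ℕ) (hr : 0 < r) (hrN : r ≤ N) (j : ι) (hj : j ∈ s) :=
    hb.clamp_mem_Icc (hx j hj) hr hrN
  refine ⟨if_pos rfl, by simp [nextThresholdRow], fun r ⟨hr, hrN⟩ => ?_,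
    fun r ⟨hr, _⟩ t ⟨ht, htN⟩ hrt => ?_⟩
  · rw [nextThresholdRow_of_pos_of_le hr (by omega)]
    exact sum_coe_mul_mem_Icc (fun j hj => (hp j hj).le) hsum (hterm r hr (by omega))
  · replace htN : t ≤ N := by omega
    rw [nextThresholdRow_of_pos_of_le hr (by omega), nextThresholdRow_of_pos_of_le ht htN]
    refine sum_coe_mul_lt_sum_coe_mul hp (hterm r hr (by omega)) (hterm t ht htN)
      (fun j _ => hb.clamp_le_clamp _ hrt.le htN) ?_
    obtain ⟨i, hi, j, hj, hij⟩ := hxlt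
    rcases hb.clamp_lt_clamp_or (EReal.coe_lt_coe_iff.2 hij) hr hrt htN with h | h
    exacts [⟨i, hi, h⟩, ⟨j, hj, h⟩]

end NextRow

lemma aT_succ (k : ℕ) (x p : ℕ → ℝ) (N : ℕ) :
    aT k x p (N + 1) = nextThresholdRow (Finset.Icc 1 k) x p N (aT k x p N) := rfl

theorem isThresholdRow_aT {k : ℕ} {x p : ℕ → ℝ} (hx : StrictMonoOn x (Set.Icc 1 k)) (hk : 1 < k)
    (hp : ∀ j ∈ Finset.Icc 1 k, 0 < p j) (hsum : ∑ j ∈ Finset.Icc 1 k, p j = 1)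
    {N : ℕ} (hN : 1 ≤ N) : IsThresholdRow (x 1) (x k) N (aT k x p N) := by
  induction N, hN using Nat.le_induction with
  | base => exact ⟨rfl, by simp [aT], fun r ⟨_, _⟩ => by omega, fun r ⟨_, _⟩ => by omega⟩
  | succ N _ ih =>
    have h1 : 1 ∈ Set.Icc 1 k := ⟨le_rfl, hk.le⟩
    have hk' : k ∈ Set.Icc 1 k := ⟨hk.le, le_rfl⟩
    rw [aT_succ]
    refine ih.next (fun j hj => ?_) ⟨1, Finset.mem_Icc.2 h1, k, Finset.mem_Icc.2 hk', hx h1 hk' hk⟩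
      hp hsum
    have hj' : j ∈ Set.Icc 1 k := Finset.mem_Icc.1 hj
    exact ⟨hx.monotoneOn h1 hj' hj'.1, hx.monotoneOn hj' hk' hj'.2⟩

/-- For every `N ≥ 2`, the thresholds `a_{N,1}, …, a_{N,N-1}` are
real numbers lying in `[x_1, x_k]` and are strictly increasing in the second
index. -/
theorem thresholds_strict_mono (k : ℕ) (hk : 3 ≤ k) (x p : ℕ → ℝ)
    (hx : ∀ i j : ℕ, 1 ≤ i → i < j → j ≤ k → x i < x j)
    (hp : ∀ j : ℕ, 1 ≤ j → j ≤ k → 0 < p j)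
    (hsum : ∑ j ∈ Finset.Icc 1 k, p j = 1) :
    ∀ N : ℕ, 2 ≤ N →
      (∀ r : ℕ, 1 ≤ r → r ≤ N - 1 →
        (x 1 : EReal) ≤ aT k x p N r ∧ aT k x p N r ≤ (x k : EReal)) ∧
      (∀ r s : ℕ, 1 ≤ r → r < s → s ≤ N - 1 → aT k x p N r < aT k x p N s) := by
  intro N hN
  have hrow : IsThresholdRow (x 1) (x k) N (aT k x p N) :=
    isThresholdRow_aT (fun i hi j hj hij => hx i j hi.1 hij hj.2) (by omega)
      (fun j hj => hp j (Finset.mem_Icc.1 hj).1 (Finset.mem_Icc.1 hj).2) hsum (by omega)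
  exact ⟨fun r hr hrN => hrow.mem_Icc r ⟨hr, by omega⟩,
    fun r s hr hrs hsN => hrow.strictMonoOn ⟨hr, by omega⟩ ⟨by omega, by omega⟩ hrs⟩
end

section
/- Let 0 < a < b < 1 and set d = d(a,b) = log((1-b)/(1-a)) / log( a(1-b) / ((1-a)b) ). Then for all b', b'' with d < b'' < b and d < b' < 1, one has D(b''‖b) < D(b'‖a), where D(y‖p) = y log(y/p) + (1-y) log((1-y)/(1-p)). -/
/-!
`D(·‖b)` decreases on `(0, b]` and `D(·‖a)` increases on `[a, 1)` (the sign of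
`∂_y D(y‖p) = log (y/p) - log ((1-y)/(1-p))`). The difference `D(y‖b) - D(y‖a)` is affine
in `y` with negative slope (the log odds ratio of `a` and `b`), positive at `y = a` and negative
at `y = b`; its zero is `d = d(a,b)`, so `a < d < b` and
`D(b''‖b) < D(d‖b) = D(d‖a) < D(b'‖a)`.
-/

/-- Bernoulli relative entropy `D(y‖p)`. -/
noncomputable def relEnt (y p : ℝ) : ℝ :=
  y * Real.log (y / p) + (1 - y) * Real.log ((1 - y) / (1 - p))

/-- `d(a,b) = log((1-b)/(1-a)) / log( a(1-b) / ((1-a)b) )`. -/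
noncomputable def dOf (a b : ℝ) : ℝ :=
  Real.log ((1 - b) / (1 - a)) / Real.log (a * (1 - b) / ((1 - a) * b))

open Real Set

lemma relEnt_self (p : ℝ) : relEnt p p = 0 := by
  simp [relEnt]

lemma hasDerivAt_relEnt_left {y p : ℝ} (hy0 : y ≠ 0) (hy1 : y ≠ 1) (hp0 : p ≠ 0)
    (hp1 : p ≠ 1) :
    HasDerivAt (fun x => relEnt x p) (log (y / p) - log ((1 - y) / (1 - p))) y := by
  have hy1' : 1 - y ≠ 0 := sub_ne_zero.mpr hy1.symm
  have hp1' : 1 - p ≠ 0 := sub_ne_zero.mpr hp1.symm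
  have hpos := (hasDerivAt_id y).mul (((hasDerivAt_id y).div_const p).log (div_ne_zero hy0 hp0))
  have hneg := ((hasDerivAt_id y).const_sub 1).mul
    ((((hasDerivAt_id y).const_sub 1).div_const (1 - p)).log (div_ne_zero hy1' hp1'))
  refine (hpos.add hneg).congr_deriv ?_
  simp only [id]
  field_simp
  ring

lemma strictAntiOn_relEnt_Ioc {p : ℝ} (hp0 : 0 < p) (hp1 : p < 1) :
    StrictAntiOn (fun y => relEnt y p) (Ioc 0 p) := by
  have hderiv : ∀ y ∈ Ioc 0 p, HasDerivAt (fun x => relEnt x p)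
      (log (y / p) - log ((1 - y) / (1 - p))) y := fun y hy =>
    hasDerivAt_relEnt_left hy.1.ne' (by linarith [hy.2]) hp0.ne' hp1.ne
  refine strictAntiOn_of_deriv_neg (convex_Ioc 0 p)
    (fun y hy => (hderiv y hy).continuousAt.continuousWithinAt) fun y hy => ?_
  rw [interior_Ioc] at hy
  rw [(hderiv y (Ioo_subset_Ioc_self hy)).deriv, sub_neg]
  have hlt : y / p < 1 := (div_lt_one hp0).mpr hy.2
  have hgt : 1 < (1 - y) / (1 - p) := (one_lt_div (by linarith)).mpr (by linarith [hy.2])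
  exact log_lt_log (div_pos hy.1 hp0) (hlt.trans hgt)

lemma strictMonoOn_relEnt_Ico {p : ℝ} (hp0 : 0 < p) (hp1 : p < 1) :
    StrictMonoOn (fun y => relEnt y p) (Ico p 1) := by
  have hderiv : ∀ y ∈ Ico p 1, HasDerivAt (fun x => relEnt x p)
      (log (y / p) - log ((1 - y) / (1 - p))) y := fun y hy =>
    hasDerivAt_relEnt_left (by linarith [hy.1]) hy.2.ne hp0.ne' hp1.ne
  refine strictMonoOn_of_deriv_pos (convex_Ico p 1)
    (fun y hy => (hderiv y hy).continuousAt.continuousWithinAt) fun y hy => ?_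
  rw [interior_Ico] at hy
  rw [(hderiv y (Ioo_subset_Ico_self hy)).deriv, sub_pos]
  have hlt : (1 - y) / (1 - p) < 1 := (div_lt_one (by linarith)).mpr (by linarith [hy.1])
  have hgt : 1 < y / p := (one_lt_div hp0).mpr hy.1
  exact log_lt_log (div_pos (by linarith [hy.2]) (by linarith)) (hlt.trans hgt)

lemma relEnt_sub_relEnt {y a b : ℝ} (hy0 : y ≠ 0) (hy1 : y ≠ 1) (ha0 : a ≠ 0) (ha1 : a ≠ 1)
    (hb0 : b ≠ 0) (hb1 : b ≠ 1) :
    relEnt y b - relEnt y a =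
      y * log (a * (1 - b) / ((1 - a) * b)) - log ((1 - b) / (1 - a)) := by
  have hy1' : 1 - y ≠ 0 := sub_ne_zero.mpr hy1.symm
  have ha1' : 1 - a ≠ 0 := sub_ne_zero.mpr ha1.symm
  have hb1' : 1 - b ≠ 0 := sub_ne_zero.mpr hb1.symm
  unfold relEnt
  rw [log_div hy0 hb0, log_div hy0 ha0, log_div hy1' hb1', log_div hy1' ha1', log_div hb1' ha1',
    log_div (mul_ne_zero ha0 hb1') (mul_ne_zero ha1' hb0), log_mul ha0 hb1', log_mul ha1' hb0]
  ring

lemma log_oddsRatio_neg {a b : ℝ} (ha : 0 < a) (hab : a < b) (hb : b < 1) :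
    log (a * (1 - b) / ((1 - a) * b)) < 0 := by
  have hden : 0 < (1 - a) * b := mul_pos (by linarith) (by linarith)
  refine log_neg (div_pos (mul_pos ha (by linarith)) hden) ((div_lt_one hden).mpr ?_)
  nlinarith

lemma dOf_mem_Ioo {a b : ℝ} (ha : 0 < a) (hab : a < b) (hb : b < 1) : dOf a b ∈ Ioo a b := by
  have hb0 : 0 < b := ha.trans hab
  have hL := log_oddsRatio_neg ha hab hb
  have hDab : relEnt b b < relEnt a b :=
    strictAntiOn_relEnt_Ioc hb0 hb ⟨ha, hab.le⟩ ⟨hb0, le_rfl⟩ hab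
  have hDba : relEnt a a < relEnt b a :=
    strictMonoOn_relEnt_Ico ha (hab.trans hb) ⟨le_rfl, hab.trans hb⟩ ⟨hab.le, hb⟩ hab
  have hga := relEnt_sub_relEnt ha.ne' (hab.trans hb).ne ha.ne' (hab.trans hb).ne hb0.ne' hb.ne
  have hgb := relEnt_sub_relEnt hb0.ne' hb.ne ha.ne' (hab.trans hb).ne hb0.ne' hb.ne
  rw [relEnt_self] at hDab hDba hga hgb
  constructor
  · rw [dOf, lt_div_iff_of_neg hL]
    linarith
  · rw [dOf, div_lt_iff_of_neg hL]
    linarith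

lemma relEnt_dOf_eq {a b : ℝ} (ha : 0 < a) (hab : a < b) (hb : b < 1) :
    relEnt (dOf a b) b = relEnt (dOf a b) a := by
  obtain ⟨had, hdb⟩ := dOf_mem_Ioo ha hab hb
  have hL := log_oddsRatio_neg ha hab hb
  rw [← sub_eq_zero, relEnt_sub_relEnt (ha.trans had).ne' (hdb.trans hb).ne ha.ne'
    (hab.trans hb).ne (ha.trans hab).ne' hb.ne, dOf, div_mul_cancel₀ _ hL.ne, sub_self]

/-- For `0 < a < b < 1`, writing `d = d(a,b)`, for all `b'`, `b''`
with `d < b'' < b` and `d < b' < 1` one has `D(b''‖b) < D(b'‖a)`. -/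
theorem relEnt_lt_relEnt (a b : ℝ) (ha : 0 < a) (hab : a < b) (hb : b < 1) :
    ∀ b' b'' : ℝ, dOf a b < b'' → b'' < b → dOf a b < b' → b' < 1 →
      relEnt b'' b < relEnt b' a := by
  intro b' b'' hdb'' hb''b hdb' hb'1
  obtain ⟨had, hdb⟩ := dOf_mem_Ioo ha hab hb
  have hd0 : 0 < dOf a b := ha.trans had
  calc relEnt b'' b
      < relEnt (dOf a b) b :=
        strictAntiOn_relEnt_Ioc (ha.trans hab) hb ⟨hd0, hdb.le⟩ ⟨hd0.trans hdb'', hb''b.le⟩ hdb''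
    _ = relEnt (dOf a b) a := relEnt_dOf_eq ha hab hb
    _ < relEnt b' a :=
        strictMonoOn_relEnt_Ico ha (hab.trans hb) ⟨had.le, hdb.trans hb⟩ ⟨(had.trans hdb').le, hb'1⟩
          hdb'
end
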